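/- Let M be an n×n matrix over RatFunc ℂ all of whose entries have intDegree ≤ 0, and let ε > 0. Then the eigenvalue-perturbation definition and the resolvent definition of the ε-pseudospectrum of M agree: closure {λ ∈ ℂ : there exists v ∈ ℂ^n with Euclidean norm ‖v‖ = 1 such that, setting w := (M - X • 1).mulVec (fun i => RatFunc.C (v i)), one has (w i).denom.eval λ ≠ 0 for every i and the Euclidean norm of the vector (fun i => RatFunc.eval (RingHom.id ℂ) λ (w i)) is < ε} equals closure {λ ∈ dom(N) : ‖N(λ)‖ > ε⁻¹}, where N := (M - X • 1)⁻¹. -/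

import Mathlib

set_option synthInstance.maxHeartbeats 1000000
set_option maxHeartbeats 1000000

open Matrix

/-- The L2 operator norm of a complex matrix (the norm induced by the Euclidean norm). -/
noncomputable def l2OpNorm {a b : Type} [Fintype a] [Fintype b] [DecidableEq b]
    (A : Matrix a b ℂ) : ℝ :=
  ‖LinearMap.toContinuousLinearMap (Matrix.toEuclideanLin A)‖

/-- Entrywise evaluation of a matrix over `RatFunc ℂ` at `lam`. -/
noncomputable def evalMat {a b : Type} (A : Matrix a b (RatFunc ℂ)) (lam : ℂ) : Matrix a b ℂ :=
  Matrix.of fun i j => RatFunc.eval (RingHom.id ℂ) lam (A i j)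

/-- The ε-pseudospectrum of a matrix over `RatFunc ℂ`, defined via the resolvent
`N = (A - X•1)⁻¹` and the L2 operator norm. -/
noncomputable def pseudoSpec {a : Type} [Fintype a] [DecidableEq a]
    (A : Matrix a a (RatFunc ℂ)) (eps : ℝ) : Set ℂ :=
  closure {lam : ℂ |
    (∀ i j, (((A - (RatFunc.X : RatFunc ℂ) • 1)⁻¹) i j).denom.eval lam ≠ 0) ∧
    eps⁻¹ < l2OpNorm (evalMat (A - (RatFunc.X : RatFunc ℂ) • 1)⁻¹ lam)}

/-!
Put `A = M - X • 1`. The entries of `M` have valuation at most `1` at infinity while `X` has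
valuation `> 1`, so comparing the largest coordinate of a kernel vector on both sides of
`M u = X u` shows that `A` is invertible. Away from the finitely many poles of the entries of `A`
and `N = A⁻¹`, evaluation is a ring homomorphism, so `A(λ)` and `N(λ)` are mutually inverse, and
for an invertible operator `T` some unit vector `v` has `‖T v‖ < ε` iff `ε⁻¹ < ‖T⁻¹‖`. Both sets
are open and the poles form a finite set, whose removal does not change the closure of an open set.
-/

namespace RatFunc

open Polynomial

variable {K : Type*} [Field K]

/-- `RatFunc.eval` is additive and multiplicative only on rational functions without a pole at
`a`; on this subring it becomes the ring homomorphism `evalAt a`. -/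
noncomputable def regularAt (a : K) : Subring (RatFunc K) :=
  Subsemiring.toSubring
    { carrier := {f | f.denom.eval a ≠ 0}
      mul_mem' := fun {f g} hf hg => ne_zero_of_dvd_ne_zero
        (by rw [Polynomial.eval_mul]; exact mul_ne_zero hf hg) (eval_dvd (denom_mul_dvd f g))
      one_mem' := by simp
      add_mem' := fun {f g} hf hg => ne_zero_of_dvd_ne_zero
        (by rw [Polynomial.eval_mul]; exact mul_ne_zero hf hg) (eval_dvd (denom_add_dvd f g))
      zero_mem' := by simp }
    (by change (-1 : RatFunc K).denom.eval a ≠ 0; rw [← map_one C, ← map_neg C, denom_C]; simp)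

theorem mem_regularAt {a : K} {f : RatFunc K} : f ∈ regularAt a ↔ f.denom.eval a ≠ 0 :=
  Iff.rfl

theorem C_mem_regularAt (a c : K) : C c ∈ regularAt a := by simp [mem_regularAt, denom_C]

noncomputable def evalAt (a : K) : regularAt a →+* K where
  toFun f := eval (RingHom.id K) a f
  map_one' := eval_one _ _
  map_mul' f g := eval_mul _ _ f.2 g.2
  map_zero' := eval_zero _ _
  map_add' f g := eval_add _ _ f.2 g.2

theorem finite_setOf_not_forall_mem_regularAt {ι : Type*} [Finite ι] (F : ι → RatFunc K) :
    {a | ¬ ∀ i, F i ∈ regularAt a}.Finite := by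
  simp only [not_forall, Set.ofPred_exists]
  exact Set.finite_iUnion fun i => by
    simpa [mem_regularAt] using finite_setOfPred_isRoot (denom_ne_zero (F i))

theorem exists_map_subtype_eq_of_forall_mem_regularAt {m n : Type*} {a : K}
    {A : Matrix m n (RatFunc K)} (hA : ∀ i j, A i j ∈ regularAt a) :
    ∃ A' : Matrix m n (regularAt a), A'.map (regularAt a).subtype = A :=
  ⟨.of fun i j => ⟨A i j, hA i j⟩, rfl⟩

theorem mulVec_C_mem_regularAt {m n : Type*} [Fintype n] {a : K} {A : Matrix m n (RatFunc K)}
    (hA : ∀ i j, A i j ∈ regularAt a) (v : n → K) (i : m) :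
    (A *ᵥ fun j => C (v j)) i ∈ regularAt a := by
  obtain ⟨A', rfl⟩ := exists_map_subtype_eq_of_forall_mem_regularAt hA
  rw [show (fun j => C (v j)) = (regularAt a).subtype ∘ fun j => ⟨C (v j), C_mem_regularAt a _⟩
    from rfl, ← RingHom.map_mulVec]
  exact Subtype.property _

theorem inftyValuation_le_one_of_intDegree_nonpos [DecidableEq (RatFunc K)] {f : RatFunc K}
    (hf : f.intDegree ≤ 0) : inftyValuation K f ≤ 1 := by
  rcases eq_or_ne f 0 with rfl | h
  · simp
  · rw [inftyValuation_apply, inftyValuation_of_nonzero (F := K) h, ← WithZero.exp_zero]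
    exact WithZero.exp_le_exp.mpr hf

theorem one_lt_inftyValuation_X [DecidableEq (RatFunc K)] : 1 < inftyValuation K X := by
  rw [inftyValuation.X, ← WithZero.exp_zero]
  exact WithZero.exp_lt_exp.mpr one_pos

section Topology

variable {𝕜 ι : Type*}

theorem isOpen_setOf_forall_mem_regularAt [NormedField 𝕜] [Finite ι] (F : ι → RatFunc 𝕜) :
    IsOpen {a | ∀ i, F i ∈ regularAt a} := by
  simp only [Set.ofPred_forall]
  exact isOpen_iInter_of_finite fun i => isOpen_ne_fun (F i).denom.continuous continuous_const

theorem continuousOn_eval [NormedField 𝕜] (F : ι → RatFunc 𝕜) :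
    ContinuousOn (fun a i => eval (RingHom.id 𝕜) a (F i)) {a | ∀ i, F i ∈ regularAt a} :=
  continuousOn_pi.mpr fun i =>
    (F i).num.continuous.continuousOn.div (F i).denom.continuous.continuousOn fun _ ha => ha i

theorem isOpen_setOf_forall_mem_regularAt_and [NormedField 𝕜] [Finite ι] (F : ι → RatFunc 𝕜)
    {U : Set (ι → 𝕜)} (hU : IsOpen U) :
    IsOpen {a | (∀ i, F i ∈ regularAt a) ∧ (fun i => eval (RingHom.id 𝕜) a (F i)) ∈ U} :=
  (continuousOn_eval F).isOpen_inter_preimage (isOpen_setOf_forall_mem_regularAt F) hU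

theorem dense_setOf_forall_mem_regularAt [NontriviallyNormedField 𝕜] [CompleteSpace 𝕜] [Finite ι]
    (F : ι → RatFunc 𝕜) : Dense {a | ∀ i, F i ∈ regularAt a} := by
  simpa only [Set.compl_ofPred, not_not] using
    (finite_setOf_not_forall_mem_regularAt F).countable.dense_compl 𝕜

variable {m n : Type*} [Finite m] [Finite n]

theorem isOpen_setOf_forall₂_mem_regularAt [NormedField 𝕜] (F : Matrix m n (RatFunc 𝕜)) :
    IsOpen {a | ∀ i j, F i j ∈ regularAt a} := by
  simpa only [Prod.forall] using isOpen_setOf_forall_mem_regularAt fun p : m × n => F p.1 p.2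

theorem dense_setOf_forall₂_mem_regularAt [NontriviallyNormedField 𝕜] [CompleteSpace 𝕜]
    (F : Matrix m n (RatFunc 𝕜)) : Dense {a | ∀ i j, F i j ∈ regularAt a} := by
  simpa only [Prod.forall] using dense_setOf_forall_mem_regularAt fun p : m × n => F p.1 p.2

end Topology

end RatFunc

theorem Matrix.det_sub_smul_one_ne_zero {K Γ₀ n : Type*} [Field K]
    [LinearOrderedCommGroupWithZero Γ₀] [Fintype n] [DecidableEq n] (v : Valuation K Γ₀)
    {M : Matrix n n K} (hM : ∀ i j, v (M i j) ≤ 1) {x : K} (hx : 1 < v x) :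
    (M - x • 1).det ≠ 0 := by
  intro hdet
  obtain ⟨u, hu, hMu⟩ := exists_mulVec_eq_zero_iff.mpr hdet
  have hMu' : M *ᵥ u = x • u := by
    rwa [sub_mulVec, smul_mulVec, one_mulVec, sub_eq_zero] at hMu
  obtain ⟨j, hj⟩ := Function.ne_iff.mp hu
  have : Nonempty n := ⟨j⟩
  obtain ⟨i, hi⟩ := Finite.exists_max fun k => v (u k)
  have hui : 0 < v (u i) := (v.pos_iff.mpr hj).trans_le (hi j)
  have hle : v ((M *ᵥ u) i) ≤ v (u i) :=
    v.map_sum_le fun k _ => by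
      rw [map_mul]; exact mul_le_of_le_one_of_le (hM i k) (hi k)
  rw [hMu', Pi.smul_apply, smul_eq_mul, map_mul] at hle
  exact (lt_mul_of_one_lt_left hui hx).not_ge hle

section EvalMat

open RatFunc

variable {l m n : Type}

theorem evalMat_map_subtype {a : ℂ} (A' : Matrix m n (regularAt a)) :
    evalMat (A'.map (regularAt a).subtype) a = A'.map (evalAt a) :=
  rfl

theorem evalMat_mul [Fintype m] {a : ℂ} {P : Matrix l m (RatFunc ℂ)} {Q : Matrix m n (RatFunc ℂ)}
    (hP : ∀ i j, P i j ∈ regularAt a) (hQ : ∀ i j, Q i j ∈ regularAt a) :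
    evalMat (P * Q) a = evalMat P a * evalMat Q a := by
  obtain ⟨P', rfl⟩ := exists_map_subtype_eq_of_forall_mem_regularAt hP
  obtain ⟨Q', rfl⟩ := exists_map_subtype_eq_of_forall_mem_regularAt hQ
  simp only [← Matrix.map_mul, evalMat_map_subtype]

theorem evalMat_one [DecidableEq n] (a : ℂ) : evalMat (1 : Matrix n n (RatFunc ℂ)) a = 1 := by
  ext i j
  rcases eq_or_ne i j with rfl | h <;> simp [evalMat, one_apply, *]

theorem eval_mulVec_C [Fintype n] {a : ℂ} {A : Matrix m n (RatFunc ℂ)}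
    (hA : ∀ i j, A i j ∈ regularAt a) (v : n → ℂ) :
    (fun i => eval (RingHom.id ℂ) a ((A *ᵥ fun j => C (v j)) i)) = evalMat A a *ᵥ v := by
  obtain ⟨A', rfl⟩ := exists_map_subtype_eq_of_forall_mem_regularAt hA
  let v' : n → regularAt a := fun j => ⟨C (v j), C_mem_regularAt a _⟩
  have hv' : evalAt a ∘ v' = v := funext fun j => eval_C _ _
  ext i
  rw [show (fun j => C (v j)) = (regularAt a).subtype ∘ v' from rfl, ← RingHom.map_mulVec,
    evalMat_map_subtype, ← hv']
  exact (evalAt a).map_mulVec A' v' i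

theorem continuousOn_evalMat (F : Matrix m n (RatFunc ℂ)) :
    ContinuousOn (evalMat F) {a | ∀ i j, F i j ∈ regularAt a} :=
  continuousOn_pi.mpr fun i => (continuousOn_eval (F i)).mono fun _ ha => ha i

theorem isOpen_setOf_forall₂_mem_regularAt_and [Finite m] [Finite n]
    (F : Matrix m n (RatFunc ℂ)) {U : Set (Matrix m n ℂ)} (hU : IsOpen U) :
    IsOpen {a | (∀ i j, F i j ∈ regularAt a) ∧ evalMat F a ∈ U} :=
  (continuousOn_evalMat F).isOpen_inter_preimage (isOpen_setOf_forall₂_mem_regularAt F) hU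

end EvalMat

theorem Dense.closure_eq_closure_of_inter_eq {X : Type*} [TopologicalSpace X] {s t d : Set X}
    (hd : Dense d) (hs : IsOpen s) (ht : IsOpen t) (h : s ∩ d = t ∩ d) :
    closure s = closure t := by
  have closure_subset {s t : Set X} (hs : IsOpen s) (h : s ∩ d = t ∩ d) :
      closure s ⊆ closure t :=
    closure_minimal ((hd.open_subset_closure_inter hs).trans
      (h ▸ closure_mono Set.inter_subset_left)) isClosed_closure
  exact (closure_subset hs h).antisymm (closure_subset ht h.symm)

theorem ContinuousLinearEquiv.exists_norm_eq_one_norm_apply_lt_iff {𝕜 E F : Type*} [RCLike 𝕜]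
    [NormedAddCommGroup E] [NormedSpace 𝕜 E] [NormedAddCommGroup F] [NormedSpace 𝕜 F]
    (e : E ≃L[𝕜] F) {ε : ℝ} (hε : 0 < ε) :
    (∃ v : E, ‖v‖ = 1 ∧ ‖e v‖ < ε) ↔ ε⁻¹ < ‖(e.symm : F →L[𝕜] E)‖ := by
  rw [inv_lt_iff_one_lt_mul₀ hε]
  constructor
  · rintro ⟨v, hv, hlt⟩
    have hle : 1 ≤ ‖(e.symm : F →L[𝕜] E)‖ * ‖e v‖ := by
      simpa [hv] using (e.symm : F →L[𝕜] E).le_opNorm (e v)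
    have hpos : 0 < ‖(e.symm : F →L[𝕜] E)‖ :=
      (norm_nonneg _).lt_of_ne fun h => by rw [← h, zero_mul] at hle; linarith
    exact hle.trans_lt (mul_lt_mul_of_pos_left hlt hpos)
  · intro hlt
    obtain ⟨x, hx, hεx⟩ := (e.symm : F →L[𝕜] E).exists_lt_apply_of_lt_opNorm
      ((inv_lt_iff_one_lt_mul₀ hε).mpr hlt)
    set y := e.symm x
    have hy : 0 < ‖y‖ := (inv_pos.mpr hε).trans hεx
    refine ⟨(‖y‖⁻¹ : 𝕜) • y, norm_smul_inv_norm (norm_pos_iff.mp hy), ?_⟩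
    rw [map_smul, e.apply_symm_apply, norm_smul, norm_inv, RCLike.norm_ofReal, abs_norm,
      inv_mul_lt_iff₀ hy]
    exact hx.trans ((inv_lt_iff_one_lt_mul₀ hε).mp hεx)

theorem continuous_l2OpNorm {n : Type} [Fintype n] [DecidableEq n] :
    Continuous (l2OpNorm : Matrix n n ℂ → ℝ) :=
  continuous_norm.comp <| LinearMap.continuous_of_finiteDimensional
    (toEuclideanCLM (𝕜 := ℂ) (n := n)).toAlgEquiv.toLinearMap

theorem exists_norm_eq_one_norm_mulVec_lt_iff {n : Type} [Fintype n] [DecidableEq n]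
    {B C : Matrix n n ℂ} (h : B * C = 1) {ε : ℝ} (hε : 0 < ε) :
    (∃ v : EuclideanSpace ℂ n, ‖v‖ = 1 ∧ ‖(WithLp.equiv 2 (n → ℂ)).symm (B *ᵥ v)‖ < ε) ↔
      ε⁻¹ < l2OpNorm C := by
  have apply_apply {P Q : Matrix n n ℂ} (hPQ : P * Q = 1) (x : EuclideanSpace ℂ n) :
      toEuclideanCLM (𝕜 := ℂ) P (toEuclideanCLM (𝕜 := ℂ) Q x) = x := by
    rw [← mul_apply_eq_comp, ← map_mul, hPQ, map_one, one_apply_eq_self]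
  exact (ContinuousLinearEquiv.equivOfInverse _ _ (apply_apply (mul_eq_one_comm.mp h))
    (apply_apply h)).exists_norm_eq_one_norm_apply_lt_iff hε

theorem pseudoSpec_perturbation_eq_resolvent {n : ℕ}
    (M : Matrix (Fin n) (Fin n) (RatFunc ℂ))
    (hdeg : ∀ i j, (M i j).intDegree ≤ 0)
    (eps : ℝ) (heps : 0 < eps) :
    closure {lam : ℂ | ∃ v : EuclideanSpace ℂ (Fin n), ‖v‖ = 1 ∧
      (∀ i, ((((M - (RatFunc.X : RatFunc ℂ) • 1).mulVec
          (fun i => RatFunc.C (v i))) i).denom).eval lam ≠ 0) ∧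
      ‖(WithLp.equiv 2 (Fin n → ℂ)).symm (fun i => RatFunc.eval (RingHom.id ℂ) lam
          (((M - (RatFunc.X : RatFunc ℂ) • 1).mulVec (fun i => RatFunc.C (v i))) i))‖ < eps}
      = pseudoSpec M eps := by
  classical
  open RatFunc in
  set A := M - (X : RatFunc ℂ) • 1
  have hA : IsUnit A.det := (det_sub_smul_one_ne_zero (inftyValuation ℂ)
    (fun i j => inftyValuation_le_one_of_intDegree_nonpos (hdeg i j))
    one_lt_inftyValuation_X).isUnit
  have hdense := (dense_setOf_forall₂_mem_regularAt A).inter_of_isOpen_left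
    (dense_setOf_forall₂_mem_regularAt A⁻¹) (isOpen_setOf_forall₂_mem_regularAt A)
  refine hdense.closure_eq_closure_of_inter_eq ?_
    (isOpen_setOf_forall₂_mem_regularAt_and A⁻¹ (isOpen_lt continuous_const continuous_l2OpNorm)) ?_
  · simp only [Set.ofPred_exists]
    exact isOpen_iUnion fun v => isOpen_const.inter <| isOpen_setOf_forall_mem_regularAt_and _
      (isOpen_lt (continuous_norm.comp (PiLp.continuous_toLp 2 _)) continuous_const)
  · ext lam
    refine and_congr_left fun ⟨hAr, hNr⟩ => ?_
    have hAN : evalMat A lam * evalMat A⁻¹ lam = 1 := by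
      rw [← evalMat_mul hAr hNr, mul_nonsing_inv A hA, evalMat_one]
    refine (exists_congr fun v => and_congr_right fun _ => ?_).trans
      ((exists_norm_eq_one_norm_mulVec_lt_iff hAN heps).trans (and_iff_right hNr).symm)
    rw [eval_mulVec_C hAr]
    exact and_iff_right (mulVec_C_mem_regularAt hAr _)
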